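/- arXiv:1801.05326 — 11 statements merged into one kernel-verified Lean document; each statement's English description precedes it below -/
import Mathlib

section
/- Let θ12, θ13, θ14, θ23, θ24 be real numbers, each lying in the open interval (0, π/2), such that θ12 + θ13 + θ14 + θ23 + θ24 ≤ π and each of the eight sums θ12+θ13, θ12+θ14, θ12+θ23, θ12+θ24, θ13+θ14, θ23+θ24, θ13+θ23, θ14+θ24 is at most 7π/12. Then cos θ12 · (cos θ13 · cos θ23 + cos θ14 · cos θ24) + cos θ13 · cos θ24 + cos θ14 · cos θ23 ≥ sin θ12 · (sin(θ13 + θ23) + sin(θ14 + θ24)). -/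
open Real

lemma one_sub_cos_mul (x y : ℝ) (hx : x ∈ Set.Icc 0 (π/2)) (hy : y ∈ Set.Icc 0 (π/2)) :
    (1 - cos x) * (1 - cos y) ≤ sin x * sin y := by
  have hcx : 0 ≤ cos x := Real.cos_nonneg_of_mem_Icc ⟨by linarith [hx.1, Real.pi_pos], hx.2⟩
  have hcy : 0 ≤ cos y := Real.cos_nonneg_of_mem_Icc ⟨by linarith [hy.1, Real.pi_pos], hy.2⟩
  have hcx1 : cos x ≤ 1 := Real.cos_le_one x
  have hcy1 : cos y ≤ 1 := Real.cos_le_one y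
  have hsx : 0 ≤ sin x := Real.sin_nonneg_of_nonneg_of_le_pi hx.1 (by linarith [hx.2, Real.pi_pos])
  have hsy : 0 ≤ sin y := Real.sin_nonneg_of_nonneg_of_le_pi hy.1 (by linarith [hy.2, Real.pi_pos])
  have px : sin x ^ 2 = 1 - cos x ^ 2 := by
    have := Real.sin_sq_add_cos_sq x; linarith
  have py : sin y ^ 2 = 1 - cos y ^ 2 := by
    have := Real.sin_sq_add_cos_sq y; linarith
  nlinarith [mul_nonneg hsx hsy, mul_nonneg (mul_nonneg hcx hcy) (mul_nonneg hsx hsy),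
    sq_nonneg (sin x * sin y - (1 - cos x) * (1 - cos y)),
    mul_nonneg (mul_nonneg (sub_nonneg.2 hcx1) (sub_nonneg.2 hcy1)) (mul_nonneg hcx hcy),
    mul_nonneg (sub_nonneg.2 hcx1) hcy, mul_nonneg hcx (sub_nonneg.2 hcy1)]

set_option maxHeartbeats 1000000 in
theorem stmt_0 (θ12 θ13 θ14 θ23 θ24 : ℝ)
    (h12 : θ12 ∈ Set.Ioo 0 (π / 2)) (h13 : θ13 ∈ Set.Ioo 0 (π / 2))
    (h14 : θ14 ∈ Set.Ioo 0 (π / 2)) (h23 : θ23 ∈ Set.Ioo 0 (π / 2))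
    (h24 : θ24 ∈ Set.Ioo 0 (π / 2))
    (hsum : θ12 + θ13 + θ14 + θ23 + θ24 ≤ π)
    (h1 : θ12 + θ13 ≤ 7 * π / 12) (h2 : θ12 + θ14 ≤ 7 * π / 12)
    (h3 : θ12 + θ23 ≤ 7 * π / 12) (h4 : θ12 + θ24 ≤ 7 * π / 12)
    (h5 : θ13 + θ14 ≤ 7 * π / 12) (h6 : θ23 + θ24 ≤ 7 * π / 12)
    (h7 : θ13 + θ23 ≤ 7 * π / 12) (h8 : θ14 + θ24 ≤ 7 * π / 12) :
    cos θ12 * (cos θ13 * cos θ23 + cos θ14 * cos θ24)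
      + cos θ13 * cos θ24 + cos θ14 * cos θ23
      ≥ sin θ12 * (sin (θ13 + θ23) + sin (θ14 + θ24)) := by
  obtain ⟨p12, q12⟩ := h12
  obtain ⟨p13, q13⟩ := h13
  obtain ⟨p14, q14⟩ := h14
  obtain ⟨p23, q23⟩ := h23
  obtain ⟨p24, q24⟩ := h24
  have hpi := Real.pi_pos
  -- basic sign facts
  have s12 : 0 ≤ sin θ12 := Real.sin_nonneg_of_nonneg_of_le_pi (le_of_lt p12) (by linarith)
  have s13 : 0 ≤ sin θ13 := Real.sin_nonneg_of_nonneg_of_le_pi (le_of_lt p13) (by linarith)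
  have s14 : 0 ≤ sin θ14 := Real.sin_nonneg_of_nonneg_of_le_pi (le_of_lt p14) (by linarith)
  have s23 : 0 ≤ sin θ23 := Real.sin_nonneg_of_nonneg_of_le_pi (le_of_lt p23) (by linarith)
  have s24 : 0 ≤ sin θ24 := Real.sin_nonneg_of_nonneg_of_le_pi (le_of_lt p24) (by linarith)
  have c12 : 0 ≤ cos θ12 := Real.cos_nonneg_of_mem_Icc ⟨by linarith, le_of_lt q12⟩
  have c13 : 0 ≤ cos θ13 := Real.cos_nonneg_of_mem_Icc ⟨by linarith, le_of_lt q13⟩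
  have c14 : 0 ≤ cos θ14 := Real.cos_nonneg_of_mem_Icc ⟨by linarith, le_of_lt q14⟩
  have c23 : 0 ≤ cos θ23 := Real.cos_nonneg_of_mem_Icc ⟨by linarith, le_of_lt q23⟩
  have c24 : 0 ≤ cos θ24 := Real.cos_nonneg_of_mem_Icc ⟨by linarith, le_of_lt q24⟩
  have c13le : cos θ13 ≤ 1 := Real.cos_le_one _
  have c14le : cos θ14 ≤ 1 := Real.cos_le_one _
  have c23le : cos θ23 ≤ 1 := Real.cos_le_one _
  have c24le : cos θ24 ≤ 1 := Real.cos_le_one _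
  -- H1 : cos (θ12+θ13+θ23) ≥ - cos (θ14+θ24)
  have H1 : -cos (θ14 + θ24) ≤ cos (θ12 + θ13 + θ23) := by
    have hmono : cos (π - (θ14 + θ24)) ≤ cos (θ12 + θ13 + θ23) :=
      Real.cos_le_cos_of_nonneg_of_le_pi (by linarith) (by linarith) (by linarith)
    rwa [Real.cos_pi_sub] at hmono
  have H2 : -cos (θ13 + θ23) ≤ cos (θ12 + θ14 + θ24) := by
    have hmono : cos (π - (θ13 + θ23)) ≤ cos (θ12 + θ14 + θ24) :=
      Real.cos_le_cos_of_nonneg_of_le_pi (by linarith) (by linarith) (by linarith)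
    rwa [Real.cos_pi_sub] at hmono
  -- key lemma instances
  have K1 : (1 - cos θ14) * (1 - cos θ24) ≤ sin θ14 * sin θ24 :=
    one_sub_cos_mul θ14 θ24 ⟨le_of_lt p14, le_of_lt q14⟩ ⟨le_of_lt p24, le_of_lt q24⟩
  have K2 : (1 - cos θ13) * (1 - cos θ23) ≤ sin θ13 * sin θ23 :=
    one_sub_cos_mul θ13 θ23 ⟨le_of_lt p13, le_of_lt q13⟩ ⟨le_of_lt p23, le_of_lt q23⟩
  -- h ≥ 0
  have hkey : 0 ≤ sin θ13 * sin θ23 + sin θ14 * sin θ24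
      + (cos θ13 - cos θ14) * (cos θ24 - cos θ23) := by
    rcases le_or_gt 0 ((cos θ13 - cos θ14) * (cos θ24 - cos θ23)) with hc | hc
    · have := mul_nonneg s13 s23
      have := mul_nonneg s14 s24
      linarith
    · rcases le_or_gt (cos θ14) (cos θ13) with hd | hd
      · -- c13 ≥ c14, so c23 > c24; (c13-c14)(c23-c24) ≤ (1-c14)(1-c24)
        have h23gt : cos θ24 - cos θ23 < 0 := by
          by_contra hcon
          push_neg at hcon
          have := mul_nonneg (sub_nonneg.2 hd) hcon
          linarith
        have hb : (cos θ13 - cos θ14) * (cos θ23 - cos θ24)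
            ≤ (1 - cos θ14) * (1 - cos θ24) :=
          mul_le_mul (by linarith) (by linarith) (by linarith) (by linarith)
        have hexp : (cos θ13 - cos θ14) * (cos θ24 - cos θ23)
            = -((cos θ13 - cos θ14) * (cos θ23 - cos θ24)) := by ring
        have := mul_nonneg s13 s23
        nlinarith [hb, this, K1]
      · have h23lt : 0 < cos θ24 - cos θ23 := by
          by_contra hcon
          push_neg at hcon
          have := mul_nonneg (by linarith : (0:ℝ) ≤ cos θ14 - cos θ13) (by linarith : (0:ℝ) ≤ cos θ23 - cos θ24)
          nlinarith
        have hb : (cos θ14 - cos θ13) * (cos θ24 - cos θ23)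
            ≤ (1 - cos θ13) * (1 - cos θ23) :=
          mul_le_mul (by linarith) (by linarith) (by linarith) (by linarith)
        have hexp : (cos θ13 - cos θ14) * (cos θ24 - cos θ23)
            = -((cos θ14 - cos θ13) * (cos θ24 - cos θ23)) := by ring
        have := mul_nonneg s14 s24
        nlinarith [hb, this, K2]
  -- expand everything
  have e1 : cos (θ12 + θ13 + θ23)
      = cos θ12 * cos θ13 * cos θ23 - cos θ12 * sin θ13 * sin θ23
        - sin θ12 * sin θ13 * cos θ23 - sin θ12 * cos θ13 * sin θ23 := by
    rw [Real.cos_add, Real.cos_add, Real.sin_add]; ring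
  have e2 : cos (θ12 + θ14 + θ24)
      = cos θ12 * cos θ14 * cos θ24 - cos θ12 * sin θ14 * sin θ24
        - sin θ12 * sin θ14 * cos θ24 - sin θ12 * cos θ14 * sin θ24 := by
    rw [Real.cos_add, Real.cos_add, Real.sin_add]; ring
  rw [Real.sin_add, Real.sin_add]
  rw [e1, Real.cos_add θ14 θ24] at H1
  rw [e2, Real.cos_add θ13 θ23] at H2
  have t1 : 0 ≤ cos θ12 * (sin θ13 * sin θ23) := mul_nonneg c12 (mul_nonneg s13 s23)
  have t2 : 0 ≤ cos θ12 * (sin θ14 * sin θ24) := mul_nonneg c12 (mul_nonneg s14 s24)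
  linarith [H1, H2, hkey, t1, t2]
end

section
/- Let θ12, θ13, θ14, θ23, θ24 be real numbers, each lying in the open interval (0, π/2), such that θ12 + θ13 + θ14 + θ23 + θ24 ≤ π and each of the eight sums θ12+θ13, θ12+θ14, θ12+θ23, θ12+θ24, θ13+θ14, θ23+θ24, θ13+θ23, θ14+θ24 is at most 7π/12. Then cos θ13 · cos θ24 + cos θ14 · cos θ23 ≥ 2 · sin(θ12 / 2). -/
open Real

/-- Case B helper: both angles and the target are small. -/
private lemma caseB_aux (c u v : ℝ) (hc0 : 0 ≤ c) (hc : c ≤ 0.433)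
    (hu0 : 0 ≤ u) (hu : u ≤ 0.433) (hv0 : 0 ≤ v) (hv : v ≤ 0.433) :
    c ≤ Real.cos u * Real.cos v := by
  have q1 := Real.one_sub_sq_div_two_le_cos (x := u)
  have q2 := Real.one_sub_sq_div_two_le_cos (x := v)
  have h1 : (0:ℝ) ≤ 1 - v ^ 2 / 2 := by nlinarith
  have h2 : (0:ℝ) ≤ Real.cos u := by nlinarith
  have key : (1 - u ^ 2 / 2) * (1 - v ^ 2 / 2) ≤ Real.cos u * Real.cos v :=
    mul_le_mul q1 q2 h1 h2
  nlinarith [sq_nonneg (u * v)]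

/-- Opposite-pair-large helper (cases A2/A3). -/
private lemma caseA2_aux (c y z : ℝ) (hc0 : 0 ≤ c) (hc : 2 * c ≤ 1.8327)
    (hy0 : 0 ≤ y) (hz0 : 0 ≤ z) (hyz : y + z ≤ 1.3091 - c) :
    c ≤ (1 - y ^ 2 / 2) * (1 - z ^ 2 / 2) := by
  have hyz0 : 0 ≤ y + z := by linarith
  have hsq : (y + z) ^ 2 ≤ (1.3091 - c) ^ 2 := by nlinarith
  nlinarith [sq_nonneg (y * z), mul_nonneg hy0 hz0, mul_nonneg hc0 (by linarith : (0:ℝ) ≤ 0.91635 - c)]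

/-- One big variable among the four (inside case A1). -/
private lemma big_aux (c v a b d : ℝ) (hc0 : 0 ≤ c) (ha0 : 0 ≤ a) (hb0 : 0 ≤ b)
    (hd0 : 0 ≤ d) (hv9 : 0.9 ≤ v) (hv14 : v ≤ 1.4)
    (hcv : c + v ≤ 1.8326) (hva : v + a ≤ 1.8326) (hvb : v + b ≤ 1.8326)
    (hvd : v + d ≤ 1.8326) (htot : c + v + a + b + d ≤ 3.1416) :
    v ^ 2 + a ^ 2 + b ^ 2 + d ^ 2 + 2 * c ≤ 4 := by
  nlinarith [mul_nonneg ha0 (by linarith : (0:ℝ) ≤ 1.8326 - v - a),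
    mul_nonneg hb0 (by linarith : (0:ℝ) ≤ 1.8326 - v - b),
    mul_nonneg hd0 (by linarith : (0:ℝ) ≤ 1.8326 - v - d),
    mul_nonneg (by linarith : (0:ℝ) ≤ 1.8326 - v) (by linarith : (0:ℝ) ≤ 3.1416 - c - v - a - b - d),
    mul_nonneg (by linarith : (0:ℝ) ≤ 0.1674 + v) (by linarith : (0:ℝ) ≤ 1.8326 - v - c),
    mul_nonneg (by linarith : (0:ℝ) ≤ v - 0.9) (by linarith : (0:ℝ) ≤ 1.4 - v)]

/-- All four variables small (inside case A1). -/
private lemma small_aux (c x y z w : ℝ) (hc0 : 0 ≤ c) (hc2 : c ≤ 1.5708)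
    (hx0 : 0 ≤ x) (hy0 : 0 ≤ y) (hz0 : 0 ≤ z) (hw0 : 0 ≤ w)
    (hx9 : x ≤ 0.9) (hy9 : y ≤ 0.9) (hz9 : z ≤ 0.9) (hw9 : w ≤ 0.9)
    (hcx : c + x ≤ 1.8326) (hcy : c + y ≤ 1.8326) (hcz : c + z ≤ 1.8326)
    (hcw : c + w ≤ 1.8326) (htot : c + x + y + z + w ≤ 3.1416) :
    x ^ 2 + y ^ 2 + z ^ 2 + w ^ 2 + 2 * c ≤ 4 := by
  rcases le_total c 1.05 with hc1 | hc1
  · nlinarith [mul_nonneg hx0 (by linarith : (0:ℝ) ≤ 0.9 - x),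
      mul_nonneg hy0 (by linarith : (0:ℝ) ≤ 0.9 - y),
      mul_nonneg hz0 (by linarith : (0:ℝ) ≤ 0.9 - z),
      mul_nonneg hw0 (by linarith : (0:ℝ) ≤ 0.9 - w)]
  · nlinarith [mul_nonneg hx0 (by linarith : (0:ℝ) ≤ 1.8326 - c - x),
      mul_nonneg hy0 (by linarith : (0:ℝ) ≤ 1.8326 - c - y),
      mul_nonneg hz0 (by linarith : (0:ℝ) ≤ 1.8326 - c - z),
      mul_nonneg hw0 (by linarith : (0:ℝ) ≤ 1.8326 - c - w),
      mul_nonneg (by linarith : (0:ℝ) ≤ 1.8326 - c) (by linarith : (0:ℝ) ≤ 3.1416 - c - x - y - z - w),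
      mul_nonneg (by linarith : (0:ℝ) ≤ c - 1.05) (by linarith : (0:ℝ) ≤ 1.5708 - c)]

private lemma qnonneg (t : ℝ) (h0 : 0 ≤ t) (h1 : t ≤ 1.4) : 0 ≤ 1 - t ^ 2 / 2 := by
  nlinarith

private lemma qsum_aux (c x y z w : ℝ)
    (hS : x ^ 2 + y ^ 2 + z ^ 2 + w ^ 2 + 2 * c ≤ 4) :
    c ≤ (1 - x ^ 2 / 2) * (1 - w ^ 2 / 2) + (1 - y ^ 2 / 2) * (1 - z ^ 2 / 2) := by
  nlinarith [sq_nonneg (x * w), sq_nonneg (y * z)]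

set_option maxHeartbeats 1600000 in
theorem stmt_1 (θ12 θ13 θ14 θ23 θ24 : ℝ)
    (h12 : θ12 ∈ Set.Ioo 0 (π / 2)) (h13 : θ13 ∈ Set.Ioo 0 (π / 2))
    (h14 : θ14 ∈ Set.Ioo 0 (π / 2)) (h23 : θ23 ∈ Set.Ioo 0 (π / 2))
    (h24 : θ24 ∈ Set.Ioo 0 (π / 2))
    (hsum : θ12 + θ13 + θ14 + θ23 + θ24 ≤ π)
    (h1 : θ12 + θ13 ≤ 7 * π / 12) (h2 : θ12 + θ14 ≤ 7 * π / 12)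
    (h3 : θ12 + θ23 ≤ 7 * π / 12) (h4 : θ12 + θ24 ≤ 7 * π / 12)
    (h5 : θ13 + θ14 ≤ 7 * π / 12) (h6 : θ23 + θ24 ≤ 7 * π / 12)
    (h7 : θ13 + θ23 ≤ 7 * π / 12) (h8 : θ14 + θ24 ≤ 7 * π / 12) :
    cos θ13 * cos θ24 + cos θ14 * cos θ23 ≥ 2 * sin (θ12 / 2) := by
  obtain ⟨hc0, hc2⟩ := h12
  obtain ⟨hx0, hx2⟩ := h13
  obtain ⟨hy0, hy2⟩ := h14
  obtain ⟨hz0, hz2⟩ := h23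
  obtain ⟨hw0, hw2⟩ := h24
  have hπu : π < 3.141593 := pi_lt_d6
  have hπl : 3.141592 < π := pi_gt_d6
  -- numeric versions of the constraints
  have G1 : θ12 + θ13 ≤ 1.8326 := by linarith
  have G2 : θ12 + θ14 ≤ 1.8326 := by linarith
  have G3 : θ12 + θ23 ≤ 1.8326 := by linarith
  have G4 : θ12 + θ24 ≤ 1.8326 := by linarith
  have G5 : θ13 + θ14 ≤ 1.8326 := by linarith
  have G6 : θ23 + θ24 ≤ 1.8326 := by linarith
  have G7 : θ13 + θ23 ≤ 1.8326 := by linarith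
  have G8 : θ14 + θ24 ≤ 1.8326 := by linarith
  have Gt : θ12 + θ13 + θ14 + θ23 + θ24 ≤ 3.1416 := by linarith
  have hchalf : θ12 / 2 < π / 2 := by linarith
  have hc157 : θ12 ≤ 1.5708 := by linarith
  -- nonnegativity of the cosines
  have c13 : 0 ≤ cos θ13 := cos_nonneg_of_mem_Icc ⟨by linarith, by linarith⟩
  have c14 : 0 ≤ cos θ14 := cos_nonneg_of_mem_Icc ⟨by linarith, by linarith⟩
  have c23 : 0 ≤ cos θ23 := cos_nonneg_of_mem_Icc ⟨by linarith, by linarith⟩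
  have c24 : 0 ≤ cos θ24 := cos_nonneg_of_mem_Icc ⟨by linarith, by linarith⟩
  -- it suffices to beat θ12
  have hsin : sin (θ12 / 2) ≤ θ12 / 2 := Real.sin_le (by linarith)
  have key : θ12 ≤ cos θ13 * cos θ24 + cos θ14 * cos θ23 := by
    rcases le_or_gt θ13 1.4 with b13 | b13
    · rcases le_or_gt θ24 1.4 with b24 | b24
      · rcases le_or_gt θ14 1.4 with b14 | b14
        · rcases le_or_gt θ23 1.4 with b23 | b23
          · -- case A : all four ≤ 1.4
            have q13 := Real.one_sub_sq_div_two_le_cos (x := θ13)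
            have q14 := Real.one_sub_sq_div_two_le_cos (x := θ14)
            have q23 := Real.one_sub_sq_div_two_le_cos (x := θ23)
            have q24 := Real.one_sub_sq_div_two_le_cos (x := θ24)
            have P1 : (1 - θ13 ^ 2 / 2) * (1 - θ24 ^ 2 / 2) ≤ cos θ13 * cos θ24 :=
              mul_le_mul q13 q24 (qnonneg θ24 (le_of_lt hw0) b24) c13
            have P2 : (1 - θ14 ^ 2 / 2) * (1 - θ23 ^ 2 / 2) ≤ cos θ14 * cos θ23 :=
              mul_le_mul q14 q23 (qnonneg θ23 (le_of_lt hz0) b23) c14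
            rcases le_or_gt (θ13 + θ24) 1.8325 with hxw | hxw
            · rcases le_or_gt (θ14 + θ23) 1.8325 with hyz | hyz
              · -- case A1 : opposite pairs are small too
                have hS : θ13 ^ 2 + θ14 ^ 2 + θ23 ^ 2 + θ24 ^ 2 + 2 * θ12 ≤ 4 := by
                  rcases le_or_gt 0.9 θ13 with hb | hb13
                  · have := big_aux θ12 θ13 θ14 θ23 θ24 (le_of_lt hc0) (le_of_lt hy0)
                      (le_of_lt hz0) (le_of_lt hw0) hb b13 G1 G5 G7 (by linarith) Gt
                    linarith
                  rcases le_or_gt 0.9 θ24 with hb | hb24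
                  · have := big_aux θ12 θ24 θ14 θ23 θ13 (le_of_lt hc0) (le_of_lt hy0)
                      (le_of_lt hz0) (le_of_lt hx0) hb b24 G4 (by linarith) (by linarith) (by linarith)
                      (by linarith)
                    linarith
                  rcases le_or_gt 0.9 θ14 with hb | hb14
                  · have := big_aux θ12 θ14 θ13 θ23 θ24 (le_of_lt hc0) (le_of_lt hx0)
                      (le_of_lt hz0) (le_of_lt hw0) hb b14 G2 (by linarith)
                      (by linarith) G8 (by linarith)
                    linarith
                  rcases le_or_gt 0.9 θ23 with hb | hb23
                  · have := big_aux θ12 θ23 θ13 θ14 θ24 (le_of_lt hc0) (le_of_lt hx0)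
                      (le_of_lt hy0) (le_of_lt hw0) hb b23 G3 (by linarith) (by linarith) (by linarith)
                      (by linarith)
                    linarith
                  · have := small_aux θ12 θ13 θ14 θ23 θ24 (le_of_lt hc0) hc157
                      (le_of_lt hx0) (le_of_lt hy0) (le_of_lt hz0) (le_of_lt hw0)
                      (le_of_lt hb13) (le_of_lt hb14) (le_of_lt hb23) (le_of_lt hb24)
                      G1 G2 G3 G4 Gt
                    linarith
                have := qsum_aux θ12 θ13 θ14 θ23 θ24 hS
                linarith
              · -- case A3 : θ14 + θ23 large
                have hA : θ12 ≤ (1 - θ13 ^ 2 / 2) * (1 - θ24 ^ 2 / 2) :=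
                  caseA2_aux θ12 θ13 θ24 (le_of_lt hc0) (by linarith)
                    (le_of_lt hx0) (le_of_lt hw0) (by linarith)
                linarith [mul_nonneg c14 c23]
            · -- case A2 : θ13 + θ24 large
              have hA : θ12 ≤ (1 - θ14 ^ 2 / 2) * (1 - θ23 ^ 2 / 2) :=
                caseA2_aux θ12 θ14 θ23 (le_of_lt hc0) (by linarith)
                  (le_of_lt hy0) (le_of_lt hz0) (by linarith)
              linarith [mul_nonneg c13 c24]
          · -- θ23 > 1.4
            have hA : θ12 ≤ cos θ13 * cos θ24 :=
              caseB_aux θ12 θ13 θ24 (le_of_lt hc0) (by linarith)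
                (le_of_lt hx0) (by linarith) (le_of_lt hw0) (by linarith)
            linarith [mul_nonneg c14 c23]
        · -- θ14 > 1.4
          have hA : θ12 ≤ cos θ13 * cos θ24 :=
            caseB_aux θ12 θ13 θ24 (le_of_lt hc0) (by linarith)
              (le_of_lt hx0) (by linarith) (le_of_lt hw0) (by linarith)
          linarith [mul_nonneg c14 c23]
      · -- θ24 > 1.4
        have hA : θ12 ≤ cos θ14 * cos θ23 :=
          caseB_aux θ12 θ14 θ23 (le_of_lt hc0) (by linarith)
            (le_of_lt hy0) (by linarith) (le_of_lt hz0) (by linarith)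
        linarith [mul_nonneg c13 c24]
    · -- θ13 > 1.4
      have hA : θ12 ≤ cos θ14 * cos θ23 :=
        caseB_aux θ12 θ14 θ23 (le_of_lt hc0) (by linarith)
          (le_of_lt hy0) (by linarith) (le_of_lt hz0) (by linarith)
      linarith [mul_nonneg c13 c24]
  linarith
end

section
/- Let θ12 be a real number with π/6 ≤ θ12 ≤ π/3, and let θ13, θ14, θ23, θ24 be real numbers in the open interval (0, π/2) such that θ13 + θ14 + θ23 + θ24 ≤ π − θ12, each of θ13, θ14, θ23, θ24 is at most 7π/12 − θ12, and each of the sums θ13+θ14, θ23+θ24, θ13+θ23, θ14+θ24 is at most 7π/12. Then cos θ13 · cos θ24 + cos θ14 · cos θ23 ≥ 2 · sin(θ12 / 2). -/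
/-!
Put `B = 7π/12 - θ12 ≤ π/2`. For `0 ≤ a, b ≤ B` the product `cos a * cos b` is at least
`cos² (B/2) - sin (B/2) * sin (a + b - B/2)`, with equality when `{a, b} = {0, B}`; in
product-to-sum form this is `sin² ((a - b)/2) ≤ sin ((a + b)/2) * sin (B - (a + b)/2)`.
Applying it to the pairs `(θ13, θ24)` and `(θ14, θ23)` and bounding the sum of the two sines via
the angle-sum bound leaves an inequality in `θ12` alone, which for `θ12 = 4w + π/6` reads
`2 sin w * (sin w + cos (3w + π/12)) ≥ 0`.
-/

open Real

lemma sin_sq_le_sin_mul_sin {d x y : ℝ} (hx : |d| ≤ x) (hy : |d| ≤ y)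
    (hx' : x ≤ π / 2) (hy' : y ≤ π / 2) : sin d ^ 2 ≤ sin x * sin y := by
  have hd : 0 ≤ |d| := abs_nonneg d
  have h0 : 0 ≤ sin |d| := sin_nonneg_of_nonneg_of_le_pi hd (by linarith [pi_pos])
  have hsx : sin |d| ≤ sin x := sin_le_sin_of_le_of_le_pi_div_two (by linarith [pi_pos]) hx' hx
  have hsy : sin |d| ≤ sin y := sin_le_sin_of_le_of_le_pi_div_two (by linarith [pi_pos]) hy' hy
  calc sin d ^ 2 = sin |d| ^ 2 := by
        rcases abs_choice d with h | h <;> rw [h]; rw [sin_neg, neg_sq]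
    _ = sin |d| * sin |d| := sq _
    _ ≤ sin x * sin y := mul_le_mul hsx hsy h0 (h0.trans hsx)

lemma cos_sq_half_sub_sin_mul_sin_le_cos_mul_cos {a b B : ℝ} (ha : 0 ≤ a) (hb : 0 ≤ b)
    (haB : a ≤ B) (hbB : b ≤ B) (hB : B ≤ π / 2) :
    cos (B / 2) ^ 2 - sin (B / 2) * sin (a + b - B / 2) ≤ cos a * cos b := by
  have hkey : sin ((a - b) / 2) ^ 2 ≤ sin ((a + b) / 2) * sin (B - (a + b) / 2) :=
    sin_sq_le_sin_mul_sin (abs_le.2 ⟨by linarith, by linarith⟩)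
      (abs_le.2 ⟨by linarith, by linarith⟩) (by linarith) (by linarith)
  have e1 := two_mul_cos_mul_cos a b
  have e2 : 2 * sin (a + b - B / 2) * sin (B / 2) = cos (a + b - B) - cos (a + b) := by
    rw [two_mul_sin_mul_sin]; ring_nf
  have e3 : 2 * sin ((a + b) / 2) * sin (B - (a + b) / 2) = cos (a + b - B) - cos B := by
    rw [two_mul_sin_mul_sin]; ring_nf
  have e4 : cos B = 2 * cos (B / 2) ^ 2 - 1 := by rw [← cos_two_mul]; ring_nf
  have e5 : cos (a - b) = 1 - 2 * sin ((a - b) / 2) ^ 2 := by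
    have h := cos_two_mul ((a - b) / 2)
    rw [show 2 * ((a - b) / 2) = a - b by ring, cos_sq'] at h
    linarith
  linarith

lemma sin_add_sin_le_two_mul_sin {x y c : ℝ} (hc0 : 0 ≤ c) (hc : c ≤ π / 2)
    (hlow : -π ≤ x + y) (hup : x + y ≤ 2 * c) (hxy : |x - y| ≤ π) :
    sin x + sin y ≤ 2 * sin c := by
  rw [sin_add_sin]
  have hcos0 : 0 ≤ cos ((x - y) / 2) :=
    cos_nonneg_of_mem_Icc ⟨by linarith [(abs_le.1 hxy).1], by linarith [(abs_le.1 hxy).2]⟩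
  have hcos1 : cos ((x - y) / 2) ≤ 1 := cos_le_one _
  have hsc : 0 ≤ sin c := sin_nonneg_of_nonneg_of_le_pi hc0 (by linarith [pi_pos])
  have hmono : sin ((x + y) / 2) ≤ sin c :=
    sin_le_sin_of_le_of_le_pi_div_two (by linarith) hc (by linarith)
  rcases le_or_gt (sin ((x + y) / 2)) 0 with hs | hs
  · linarith [mul_nonpos_of_nonpos_of_nonneg hs hcos0]
  · linarith [mul_le_of_le_one_right hs.le hcos1]

lemma two_mul_sin_half_le {t : ℝ} (h1 : π / 6 ≤ t) (h2 : t ≤ π / 3) :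
    2 * sin (t / 2) ≤
      2 * (cos ((7 * π / 12 - t) / 2) ^ 2 - sin ((7 * π / 12 - t) / 2) * sin (5 * π / 24)) := by
  obtain ⟨w, rfl⟩ : ∃ w, t = 4 * w + π / 6 := ⟨(t - π / 6) / 4, by ring⟩
  have hw0 : 0 ≤ w := by linarith
  have hw1 : w ≤ π / 24 := by linarith
  have e1 : 2 * cos ((7 * π / 12 - (4 * w + π / 6)) / 2) ^ 2 = 1 + sin (4 * w + π / 12) := by
    rw [← cos_pi_div_two_sub, cos_sq]; ring_nf
  have e2 : 2 * sin ((7 * π / 12 - (4 * w + π / 6)) / 2) * sin (5 * π / 24)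
      = cos (2 * w) - sin (2 * w + π / 12) := by
    rw [two_mul_sin_mul_sin, ← cos_pi_div_two_sub (2 * w + π / 12), ← cos_neg (2 * w)]
    ring_nf
  have e3 : 1 - cos (2 * w) = 2 * sin w ^ 2 := by rw [cos_two_mul, cos_sq']; ring
  have e4 : sin (4 * w + π / 12) - sin (2 * w + π / 12) = 2 * sin w * cos (3 * w + π / 12) := by
    rw [sin_sub_sin]; ring_nf
  have hsw : 0 ≤ sin w := sin_nonneg_of_nonneg_of_le_pi hw0 (by linarith [pi_pos])
  have hcw : 0 ≤ cos (3 * w + π / 12) :=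
    cos_nonneg_of_mem_Icc ⟨by linarith [pi_pos], by linarith⟩
  rw [show (4 * w + π / 6) / 2 = 2 * w + π / 12 by ring]
  linarith [mul_nonneg hsw hcw, sq_nonneg (sin w)]

theorem stmt_2_general (θ12 θ13 θ14 θ23 θ24 : ℝ)
    (h12 : π / 6 ≤ θ12 ∧ θ12 ≤ π / 3)
    (h13 : θ13 ∈ Set.Ioo 0 (π / 2)) (h14 : θ14 ∈ Set.Ioo 0 (π / 2))
    (h23 : θ23 ∈ Set.Ioo 0 (π / 2)) (h24 : θ24 ∈ Set.Ioo 0 (π / 2))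
    (hsum : θ13 + θ14 + θ23 + θ24 ≤ π - θ12)
    (hb13 : θ13 ≤ 7 * π / 12 - θ12) (hb14 : θ14 ≤ 7 * π / 12 - θ12)
    (hb23 : θ23 ≤ 7 * π / 12 - θ12) (hb24 : θ24 ≤ 7 * π / 12 - θ12) :
    cos θ13 * cos θ24 + cos θ14 * cos θ23 ≥ 2 * sin (θ12 / 2) := by
  have hB : 7 * π / 12 - θ12 ≤ π / 2 := by linarith
  set B := 7 * π / 12 - θ12 with hB_def
  obtain ⟨h13, -⟩ := h13; obtain ⟨h14, -⟩ := h14; obtain ⟨h23, -⟩ := h23; obtain ⟨h24, -⟩ := h24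
  have hA1 := cos_sq_half_sub_sin_mul_sin_le_cos_mul_cos h13.le h24.le hb13 hb24 hB
  have hA2 := cos_sq_half_sub_sin_mul_sin_le_cos_mul_cos h14.le h23.le hb14 hb23 hB
  have hsin : sin (θ13 + θ24 - B / 2) + sin (θ14 + θ23 - B / 2) ≤ 2 * sin (5 * π / 24) :=
    sin_add_sin_le_two_mul_sin (by positivity) (by linarith) (by linarith) (by linarith)
      (abs_le.2 ⟨by linarith, by linarith⟩)
  have hsB : 0 ≤ sin (B / 2) := sin_nonneg_of_nonneg_of_le_pi (by linarith) (by linarith)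
  have hθ12 := two_mul_sin_half_le h12.1 h12.2
  linarith [mul_le_mul_of_nonneg_left hsin hsB]

theorem stmt_2 (θ12 θ13 θ14 θ23 θ24 : ℝ)
    (h12 : π / 6 ≤ θ12 ∧ θ12 ≤ π / 3)
    (h13 : θ13 ∈ Set.Ioo 0 (π / 2)) (h14 : θ14 ∈ Set.Ioo 0 (π / 2))
    (h23 : θ23 ∈ Set.Ioo 0 (π / 2)) (h24 : θ24 ∈ Set.Ioo 0 (π / 2))
    (hsum : θ13 + θ14 + θ23 + θ24 ≤ π - θ12)
    (hb13 : θ13 ≤ 7 * π / 12 - θ12) (hb14 : θ14 ≤ 7 * π / 12 - θ12)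
    (hb23 : θ23 ≤ 7 * π / 12 - θ12) (hb24 : θ24 ≤ 7 * π / 12 - θ12)
    (h5 : θ13 + θ14 ≤ 7 * π / 12) (h6 : θ23 + θ24 ≤ 7 * π / 12)
    (h7 : θ13 + θ23 ≤ 7 * π / 12) (h8 : θ14 + θ24 ≤ 7 * π / 12) :
    cos θ13 * cos θ24 + cos θ14 * cos θ23 ≥ 2 * sin (θ12 / 2) :=
  stmt_2_general θ12 θ13 θ14 θ23 θ24 h12 h13 h14 h23 h24 hsum hb13 hb14 hb23 hb24
end

section
/- Let θ13, θ14, θ23, θ24 be real numbers in the open interval (0, π/2) such that each of the sums θ13+θ14, θ23+θ24, θ13+θ23, θ14+θ24 is at most 7π/12. Then cos θ13 · cos θ24 + cos θ14 · cos θ23 ≥ 1 − sin(π/12). -/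
open Real

private lemma prodsum (p q : ℝ) : cos p * cos q = (cos (p+q) + cos (p-q)) / 2 := by
  rw [cos_add, cos_sub]; ring

private lemma cos_ge_of_abs_le {u M : ℝ} (h : |u| ≤ M) (hM : M ≤ π) : cos M ≤ cos u := by
  rw [← cos_abs u]
  exact cos_le_cos_of_nonneg_of_le_pi (abs_nonneg u) hM h

set_option maxHeartbeats 1000000 in
theorem stmt_3 (θ13 θ14 θ23 θ24 : ℝ)
    (h13 : θ13 ∈ Set.Ioo 0 (π / 2)) (h14 : θ14 ∈ Set.Ioo 0 (π / 2))
    (h23 : θ23 ∈ Set.Ioo 0 (π / 2)) (h24 : θ24 ∈ Set.Ioo 0 (π / 2))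
    (h5 : θ13 + θ14 ≤ 7 * π / 12) (h6 : θ23 + θ24 ≤ 7 * π / 12)
    (h7 : θ13 + θ23 ≤ 7 * π / 12) (h8 : θ14 + θ24 ≤ 7 * π / 12) :
    cos θ13 * cos θ24 + cos θ14 * cos θ23 ≥ 1 - sin (π / 12) := by
  obtain ⟨ha0, ha1⟩ := h13
  obtain ⟨hb0, hb1⟩ := h14
  obtain ⟨hc0, hc1⟩ := h23
  obtain ⟨hd0, hd1⟩ := h24
  have hpi := pi_pos
  set a := θ13
  set b := θ14
  set c := θ23
  set d := θ24
  set C : ℝ := 7 * π / 12 with hCdef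
  set m : ℝ := (a+b+c+d)/2 with hm
  set x : ℝ := (a+d-b-c)/2 with hx
  set y : ℝ := (a+b-c-d)/2 with hy
  set z : ℝ := (a+c-b-d)/2 with hz
  have key : cos a * cos d + cos b * cos c = cos m * cos x + cos y * cos z := by
    rw [prodsum a d, prodsum b c, prodsum m x, prodsum y z, hm, hx, hy, hz]
    ring_nf
  have hCcos : cos C = - sin (π/12) := by
    rw [hCdef, show (7*π/12 : ℝ) = π - (π/2 - π/12) by ring, cos_pi_sub, cos_pi_div_two_sub]
  have hs12nn : (0:ℝ) ≤ sin (π/12) :=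
    sin_nonneg_of_nonneg_of_le_pi (by positivity) (by linarith)
  have hCneg : cos C ≤ 0 := by rw [hCcos]; linarith only [hs12nn]
  rw [ge_iff_le, show (1 : ℝ) - sin (π/12) = 1 + cos C by rw [hCcos]; ring, key]
  have hm0 : 0 < m := by rw [hm]; linarith only [ha0, hb0, hc0, hd0]
  have hmC : m ≤ C := by rw [hm]; linarith only [h5, h6]
  have hCpi : C ≤ π := by rw [hCdef]; linarith only [hpi]
  have hChalf : π/2 < C := by rw [hCdef]; linarith only [hpi]
  have hxm : |x| ≤ m := by
    rw [abs_le, hx, hm]; constructor <;> linarith only [ha0, hb0, hc0, hd0]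
  have hyCm : |y| ≤ C - m := by
    rw [abs_le, hy, hm]; constructor <;> linarith only [h5, h6]
  have hzCm : |z| ≤ C - m := by
    rw [abs_le, hz, hm]; constructor <;> linarith only [h7, h8]
  have hym : |y| ≤ m := by
    rw [abs_le, hy, hm]; constructor <;> linarith only [ha0, hb0, hc0, hd0]
  have hzm : |z| ≤ m := by
    rw [abs_le, hz, hm]; constructor <;> linarith only [ha0, hb0, hc0, hd0]
  clear_value a b c d C m x y z
  clear key hx hy hz hm
  rcases le_or_gt m (π/2) with hcase | hcase
  · -- m ≤ π/2
    have hcosm0 : 0 ≤ cos m := cos_nonneg_of_mem_Icc ⟨by linarith only [hm0, hpi], hcase⟩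
    have hcosxm : cos m ≤ cos x := cos_ge_of_abs_le hxm (by linarith only [hcase, hpi])
    have h1 : cos m * cos m ≤ cos m * cos x := mul_le_mul_of_nonneg_left hcosxm hcosm0
    set M : ℝ := min m (C - m) with hM
    have hM0 : 0 ≤ M := le_min hm0.le (by linarith only [hmC])
    have hMhalf : M ≤ π/2 := le_trans (min_le_left _ _) hcase
    have hcosM0 : 0 ≤ cos M := cos_nonneg_of_mem_Icc ⟨by linarith only [hM0, hpi], hMhalf⟩
    have hcy : cos M ≤ cos y :=
      cos_ge_of_abs_le (le_min hym hyCm) (by linarith only [hMhalf, hpi])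
    have hcz : cos M ≤ cos z :=
      cos_ge_of_abs_le (le_min hzm hzCm) (by linarith only [hMhalf, hpi])
    have h2 : cos M * cos M ≤ cos y * cos z :=
      mul_le_mul hcy hcz hcosM0 (le_trans hcosM0 hcy)
    have hgoal : 1 + cos C ≤ cos m * cos m + cos M * cos M := by
      rcases le_total m (C - m) with hmm | hmm
      · have hMe : M = m := min_eq_left hmm
        have hsq : cos m * cos m = 1/2 + cos (2*m) / 2 := by
          have h := cos_sq m; linear_combination h
        have hmono : cos C ≤ cos (2*m) :=
          cos_le_cos_of_nonneg_of_le_pi (by linarith only [hm0]) hCpi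
            (by linarith only [hmm])
        rw [hMe]; linarith only [hsq, hmono]
      · have hMe : M = C - m := min_eq_right hmm
        have hps : cos C * cos (C - 2*m) = (cos (2*(C-m)) + cos (2*m)) / 2 := by
          have h := prodsum C (C - 2*m)
          rw [show C + (C-2*m) = 2*(C-m) by ring, show C - (C-2*m) = 2*m by ring] at h
          exact h
        have hsq1 : cos (C-m) * cos (C-m) = 1/2 + cos (2*(C-m)) / 2 := by
          have h := cos_sq (C-m); linear_combination h
        have hsq2 : cos m * cos m = 1/2 + cos (2*m) / 2 := by
          have h := cos_sq m; linear_combination h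
        have hle1 : cos C * 1 ≤ cos C * cos (C - 2*m) :=
          mul_le_mul_of_nonpos_left (cos_le_one _) hCneg
        rw [hMe]; linarith only [hps, hsq1, hsq2, hle1]
    linarith only [h1, h2, hgoal]
  · -- m > π/2
    have hcosm0 : cos m ≤ 0 :=
      cos_nonpos_of_pi_div_two_le_of_le hcase.le (by linarith only [hmC, hCpi, hpi])
    have h1 : cos m * 1 ≤ cos m * cos x := mul_le_mul_of_nonpos_left (cos_le_one x) hcosm0
    have hCm0 : 0 ≤ C - m := by linarith only [hmC]
    have hCmhalf : C - m ≤ π/2 := by linarith only [hCdef, hcase, hpi]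
    have hcosCm0 : 0 ≤ cos (C - m) := cos_nonneg_of_mem_Icc ⟨by linarith only [hCm0, hpi], hCmhalf⟩
    have hcy : cos (C - m) ≤ cos y := cos_ge_of_abs_le hyCm (by linarith only [hCmhalf, hpi])
    have hcz : cos (C - m) ≤ cos z := cos_ge_of_abs_le hzCm (by linarith only [hCmhalf, hpi])
    have h2 : cos (C-m) * cos (C-m) ≤ cos y * cos z :=
      mul_le_mul hcy hcz hcosCm0 (le_trans hcosCm0 hcy)
    have hcsc : cos C - cos m = -2 * sin ((C+m)/2) * sin ((C-m)/2) := cos_sub_cos C m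
    have hpyth : cos (C-m) * cos (C-m) = 1 - sin (C-m) * sin (C-m) := by
      have h := sin_sq_add_cos_sq (C - m); linear_combination h
    have hst : sin (C - m) = 2 * sin ((C-m)/2) * cos ((C-m)/2) := by
      rw [show C - m = 2 * ((C-m)/2) by ring, sin_two_mul]; ring_nf
    have hs2nn : 0 ≤ sin ((C-m)/2) :=
      sin_nonneg_of_nonneg_of_le_pi (by linarith only [hCm0]) (by linarith only [hCmhalf, hpi])
    have hc2le : cos ((C-m)/2) ≤ 1 := cos_le_one _
    have hstnn : 0 ≤ sin (C - m) :=
      sin_nonneg_of_nonneg_of_le_pi hCm0 (by linarith only [hCmhalf, hpi])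
    have hsmall : sin (C - m) ≤ sin (π/12) := by
      rw [← cos_pi_div_two_sub, ← cos_pi_div_two_sub]
      exact cos_le_cos_of_nonneg_of_le_pi (by linarith only [hpi])
        (by linarith only [hCm0, hpi]) (by linarith only [hCdef, hcase, hpi])
    have hbig : cos (π/12) ≤ sin ((C+m)/2) := by
      rw [← cos_pi_div_two_sub]
      apply cos_ge_of_abs_le _ (by linarith only [hpi])
      rw [abs_le]
      constructor <;> linarith only [hCdef, hcase, hmC]
    have hsc : sin (π/12) ≤ cos (π/12) := by
      rw [← cos_pi_div_two_sub]
      exact cos_le_cos_of_nonneg_of_le_pi (by linarith only [hpi])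
        (by linarith only [hpi]) (by linarith only [hpi])
    have step1 : sin (C-m) * sin (C-m) ≤ sin (π/12) * sin (C-m) :=
      mul_le_mul_of_nonneg_right hsmall hstnn
    have step2 : sin (π/12) * sin (C-m) ≤ sin (π/12) * (2 * sin ((C-m)/2)) := by
      apply mul_le_mul_of_nonneg_left _ hs12nn
      rw [hst]
      have h := mul_le_mul_of_nonneg_left hc2le
        (show (0:ℝ) ≤ 2 * sin ((C-m)/2) by linarith only [hs2nn])
      linarith only [h]
    have step3 : sin (π/12) * (2 * sin ((C-m)/2)) ≤ sin ((C+m)/2) * (2 * sin ((C-m)/2)) :=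
      mul_le_mul_of_nonneg_right (le_trans hsc hbig) (by linarith only [hs2nn])
    linarith only [h1, h2, hcsc, hpyth, step1, step2, step3]
end

section
/- Let θ12, θ13, θ14, θ23, θ24 be real numbers, each lying in the open interval (0, π/2), such that θ12 + θ13 + θ14 + θ23 + θ24 ≤ π. Then cos θ12 · (cos θ13 · cos θ23 + cos θ14 · cos θ24) − sin θ12 · (sin(θ13 + θ23) + sin(θ14 + θ24)) ≥ −2 · sin(θ12 / 2). -/
open Real

theorem stmt_4 (θ12 θ13 θ14 θ23 θ24 : ℝ)
    (h12 : θ12 ∈ Set.Ioo 0 (π / 2)) (h13 : θ13 ∈ Set.Ioo 0 (π / 2))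
    (h14 : θ14 ∈ Set.Ioo 0 (π / 2)) (h23 : θ23 ∈ Set.Ioo 0 (π / 2))
    (h24 : θ24 ∈ Set.Ioo 0 (π / 2))
    (hsum : θ12 + θ13 + θ14 + θ23 + θ24 ≤ π) :
    cos θ12 * (cos θ13 * cos θ23 + cos θ14 * cos θ24)
      - sin θ12 * (sin (θ13 + θ23) + sin (θ14 + θ24))
      ≥ -(2 * sin (θ12 / 2)) := by
  obtain ⟨h12a, h12b⟩ := h12
  obtain ⟨h13a, h13b⟩ := h13
  obtain ⟨h14a, h14b⟩ := h14
  obtain ⟨h23a, h23b⟩ := h23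
  obtain ⟨h24a, h24b⟩ := h24
  have hpi := pi_pos
  have hc12 : 0 < cos θ12 := cos_pos_of_mem_Ioo ⟨by linarith, h12b⟩
  set a := θ13 + θ23 with ha
  set b := θ14 + θ24 with hb
  have key1 : cos a ≤ cos θ13 * cos θ23 := by
    have := cos_add θ13 θ23
    nlinarith [sin_pos_of_pos_of_lt_pi h13a (by linarith : θ13 < π),
      sin_pos_of_pos_of_lt_pi h23a (by linarith : θ23 < π)]
  have key2 : cos b ≤ cos θ14 * cos θ24 := by
    have := cos_add θ14 θ24
    nlinarith [sin_pos_of_pos_of_lt_pi h14a (by linarith : θ14 < π),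
      sin_pos_of_pos_of_lt_pi h24a (by linarith : θ24 < π)]
  have step : cos θ12 * (cos θ13 * cos θ23 + cos θ14 * cos θ24)
      - sin θ12 * (sin a + sin b)
      ≥ cos (θ12 + a) + cos (θ12 + b) := by
    have e1 := cos_add θ12 a
    have e2 := cos_add θ12 b
    nlinarith
  have goal2 : cos (θ12 + a) + cos (θ12 + b) ≥ -(2 * sin (θ12 / 2)) := by
    rw [cos_add_cos]
    set C := cos ((θ12 + a + (θ12 + b)) / 2) with hC
    set D := cos ((θ12 + a - (θ12 + b)) / 2) with hD
    have hD0 : 0 ≤ D := by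
      apply cos_nonneg_of_mem_Icc
      constructor <;> simp only [ha, hb] <;> [linarith; linarith]
    have hD1 : D ≤ 1 := cos_le_one _
    have hs : 0 < sin (θ12 / 2) :=
      sin_pos_of_pos_of_lt_pi (by linarith) (by linarith)
    rcases le_or_gt 0 C with hC0 | hC0
    · nlinarith
    · have hCge : cos (π / 2 + θ12 / 2) ≤ C := by
        apply cos_le_cos_of_nonneg_of_le_pi (by linarith) (by linarith)
        simp only [ha, hb]; linarith
      have hval : cos (π / 2 + θ12 / 2) = -sin (θ12 / 2) := by
        rw [cos_add]; simp
      have hCD : C ≤ C * D := by nlinarith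
      rw [hval] at hCge
      nlinarith
  linarith
end

section
/- Let θ be a real number with 0 < θ < π/2, and let h, k be nonnegative real numbers with h + k ≤ π − θ. Then cos(θ + h) + cos(θ + k) ≥ −2 · sin(θ / 2). -/
open Real

theorem stmt_5 (θ h k : ℝ) (hθ : 0 < θ) (hθ' : θ < π / 2)
    (hh : 0 ≤ h) (hk : 0 ≤ k) (hhk : h + k ≤ π - θ) :
    cos (θ + h) + cos (θ + k) ≥ -(2 * sin (θ / 2)) := by
  have hpi := Real.pi_pos
  have key : cos (θ + h) + cos (θ + k)
      = 2 * cos (θ + (h + k) / 2) * cos ((h - k) / 2) := by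
    rw [Real.cos_add_cos]; ring_nf
  have hd0 : 0 ≤ cos ((h - k) / 2) := by
    apply Real.cos_nonneg_of_mem_Icc
    constructor <;> nlinarith
  have hd1 : cos ((h - k) / 2) ≤ 1 := Real.cos_le_one _
  have hc : cos (π / 2 + θ / 2) ≤ cos (θ + (h + k) / 2) := by
    apply Real.cos_le_cos_of_nonneg_of_le_pi <;> nlinarith
  rw [show cos (π / 2 + θ / 2) = -sin (θ / 2) by rw [Real.cos_add]; simp] at hc
  have hs : 0 ≤ sin (θ / 2) := Real.sin_nonneg_of_nonneg_of_le_pi (by linarith) (by linarith)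
  rw [key]
  nlinarith [mul_nonneg (by linarith : (0:ℝ) ≤ cos (θ + (h + k) / 2) + sin (θ / 2)) hd0]
end

section
/- Let θ be a real number with π/6 ≤ θ ≤ π/3, and let x, y be real numbers with 0 ≤ x ≤ 7π/12 − θ, 0 ≤ y ≤ 7π/12 − θ, and x + y ≤ 7π/12. Then cos x + cos y ≥ cos(7π/12 − θ) + cos θ. -/
open Real

theorem stmt_8 (θ x y : ℝ) (hθ : π / 6 ≤ θ) (hθ' : θ ≤ π / 3)
    (hx0 : 0 ≤ x) (hx : x ≤ 7 * π / 12 - θ)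
    (hy0 : 0 ≤ y) (hy : y ≤ 7 * π / 12 - θ)
    (hxy : x + y ≤ 7 * π / 12) :
    cos x + cos y ≥ cos (7 * π / 12 - θ) + cos θ := by
  have hπ := Real.pi_pos
  have key : ∀ a b : ℝ, 0 ≤ a → a ≤ b → b ≤ π → cos b ≤ cos a := fun a b ha hab hb =>
    Real.cos_le_cos_of_nonneg_of_le_pi ha hb hab
  by_cases hyθ : y ≤ θ
  · have h1 : cos (7 * π / 12 - θ) ≤ cos x := key x _ hx0 hx (by linarith)
    have h2 : cos θ ≤ cos y := key y θ hy0 hyθ (by linarith)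
    linarith
  by_cases hxθ : x ≤ θ
  · have h1 : cos (7 * π / 12 - θ) ≤ cos y := key y _ hy0 hy (by linarith)
    have h2 : cos θ ≤ cos x := key x θ hx0 hxθ (by linarith)
    linarith
  push_neg at hyθ hxθ
  have e1 : cos x + cos y = 2 * cos ((x + y) / 2) * cos ((x - y) / 2) :=
    Real.cos_add_cos x y
  have e2 : cos (x + y - θ) + cos θ = 2 * cos ((x + y) / 2) * cos ((x + y - 2 * θ) / 2) := by
    rw [Real.cos_add_cos]
    ring_nf
  have hc : 0 < cos ((x + y) / 2) :=
    Real.cos_pos_of_mem_Ioo ⟨by linarith, by linarith⟩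
  have hd : cos ((x + y - 2 * θ) / 2) ≤ cos ((x - y) / 2) := by
    rw [← Real.cos_abs ((x - y) / 2)]
    refine key _ _ (abs_nonneg _) (abs_le.mpr ⟨by linarith, by linarith⟩) (by linarith)
  have h3 : cos (x + y - θ) + cos θ ≤ cos x + cos y := by nlinarith
  have h4 : cos (7 * π / 12 - θ) ≤ cos (x + y - θ) :=
    key _ _ (by linarith) (by linarith) (by linarith)
  linarith
end

section
/- For every real number θ with π/6 ≤ θ ≤ π/3, one has (√3 + 1 + cos(7π/6 − 2θ)) / 2 > 2 · sin(θ / 2). -/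
open Real

theorem stmt_9 (θ : ℝ) (hθ : π / 6 ≤ θ) (hθ' : θ ≤ π / 3) :
    (Real.sqrt 3 + 1 + cos (7 * π / 6 - 2 * θ)) / 2 > 2 * sin (θ / 2) := by
  have hπ : 0 < π := Real.pi_pos
  have hπ' : π < 3.15 := Real.pi_lt_d2
  have hθ0 : 0 < θ / 2 := by linarith
  have hsin : sin (θ / 2) < θ / 2 := Real.sin_lt hθ0
  have hs3 : 1.7 < Real.sqrt 3 := by
    have : (1.7 : ℝ) = Real.sqrt (1.7 ^ 2) := by
      rw [Real.sqrt_sq]; norm_num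
    rw [this]
    apply Real.sqrt_lt_sqrt <;> norm_num
  rcases le_or_gt θ (π / 4) with h | h
  · -- arg ∈ [2π/3, 5π/6]
    have harg : cos (5 * π / 6) ≤ cos (7 * π / 6 - 2 * θ) := by
      apply Real.cos_le_cos_of_nonneg_of_le_pi (by linarith) (by linarith) (by linarith)
    have hc : cos (5 * π / 6) = -(Real.sqrt 3 / 2) := by
      have : (5 : ℝ) * π / 6 = π - π / 6 := by ring
      rw [this, Real.cos_pi_sub, Real.cos_pi_div_six]
    rw [hc] at harg
    nlinarith [Real.sq_sqrt (by norm_num : (3:ℝ) ≥ 0)]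
  · -- arg ∈ [π/2, 2π/3]
    have harg : cos (2 * π / 3) ≤ cos (7 * π / 6 - 2 * θ) := by
      apply Real.cos_le_cos_of_nonneg_of_le_pi (by linarith) (by linarith) (by linarith)
    have hc : cos (2 * π / 3) = -(1 / 2) := by
      have : (2 : ℝ) * π / 3 = π - π / 3 := by ring
      rw [this, Real.cos_pi_sub, Real.cos_pi_div_three]
    rw [hc] at harg
    nlinarith
end

section
/- For every real number θ with π/6 ≤ θ ≤ π/3, one has (cos(π/6) − cos(π/6 + θ) + cos(7π/12 − θ) + cos θ) / 2 > 2 · sin(θ / 2). -/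
/-! The difference `trigExcess θ` of the two sides has derivative
`(sin (π/6 + θ) + sin (7π/12 - θ) - sin θ) / 2 - cos (θ/2) < (2 - 1/2) / 2 - √3/2 < 0` on `(π/6, π/3)`,
so it is smallest at `θ = π/3`, where it equals `(√3 + √2 + 1) / 4 - 1 > 0` because `√3 + √2 > 3`. -/

open Real Set

noncomputable def trigExcess (θ : ℝ) : ℝ :=
  (cos (π / 6) - cos (π / 6 + θ) + cos (7 * π / 12 - θ) + cos θ) / 2 - 2 * sin (θ / 2)

theorem hasDerivAt_trigExcess (x : ℝ) :
    HasDerivAt trigExcess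
      ((sin (π / 6 + x) + sin (7 * π / 12 - x) - sin x) / 2 - cos (x / 2)) x := by
  have h₁ : HasDerivAt (fun x => cos (π / 6 + x)) (-sin (π / 6 + x)) x := by
    simpa using ((hasDerivAt_id x).const_add (π / 6)).cos
  have h₂ : HasDerivAt (fun x => cos (7 * π / 12 - x)) (sin (7 * π / 12 - x)) x := by
    simpa using ((hasDerivAt_id x).const_sub (7 * π / 12)).cos
  have h₃ : HasDerivAt (fun x => 2 * sin (x / 2)) (2 * (cos (x / 2) * (1 / 2))) x := by
    simpa using (((hasDerivAt_id x).div_const 2).sin).const_mul 2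
  have h := ((((hasDerivAt_const x (cos (π / 6))).sub h₁).add h₂).add (hasDerivAt_cos x)).div_const 2
    |>.sub h₃
  exact h.congr_deriv (by ring)

theorem trigExcess_deriv_neg {x : ℝ} (hx₁ : π / 6 < x) (hx₂ : x < π / 3) :
    (sin (π / 6 + x) + sin (7 * π / 12 - x) - sin x) / 2 - cos (x / 2) < 0 := by
  have hπ := pi_pos
  have hsin : 1 / 2 < sin x := by
    rw [← sin_pi_div_six]
    exact strictMonoOn_sin ⟨by linarith, by linarith⟩ ⟨by linarith, by linarith⟩ hx₁
  have hcos : √3 / 2 < cos (x / 2) := by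
    rw [← cos_pi_div_six]
    exact cos_lt_cos_of_nonneg_of_le_pi (by linarith) (by linarith) (by linarith)
  have hsqrt3 : (17 : ℝ) / 10 < √3 := by
    rw [lt_sqrt (by norm_num)]
    norm_num
  linarith [sin_le_one (π / 6 + x), sin_le_one (7 * π / 12 - x)]

theorem strictAntiOn_trigExcess : StrictAntiOn trigExcess (Icc (π / 6) (π / 3)) := by
  refine strictAntiOn_of_deriv_neg (convex_Icc _ _)
    (fun x _ => (hasDerivAt_trigExcess x).continuousAt.continuousWithinAt) ?_
  intro x hx
  rw [interior_Icc] at hx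
  rw [(hasDerivAt_trigExcess x).deriv]
  exact trigExcess_deriv_neg hx.1 hx.2

theorem trigExcess_pi_div_three_pos : 0 < trigExcess (π / 3) := by
  have e₁ : π / 6 + π / 3 = π / 2 := by ring
  have e₂ : 7 * π / 12 - π / 3 = π / 4 := by ring
  have e₃ : π / 3 / 2 = π / 6 := by ring
  rw [trigExcess, e₁, e₂, e₃, cos_pi_div_two, cos_pi_div_four, cos_pi_div_three,
    cos_pi_div_six, sin_pi_div_six]
  have hsqrt3 : (173 : ℝ) / 100 < √3 := by
    rw [lt_sqrt (by norm_num)]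
    norm_num
  have hsqrt2 : (141 : ℝ) / 100 < √2 := by
    rw [lt_sqrt (by norm_num)]
    norm_num
  linarith

theorem stmt_10 (θ : ℝ) (hθ : π / 6 ≤ θ) (hθ' : θ ≤ π / 3) :
    (cos (π / 6) - cos (π / 6 + θ) + cos (7 * π / 12 - θ) + cos θ) / 2
      > 2 * sin (θ / 2) := by
  have hπ := pi_pos
  have h : trigExcess (π / 3) ≤ trigExcess θ :=
    strictAntiOn_trigExcess.antitoneOn ⟨hθ, hθ'⟩ ⟨by linarith, le_rfl⟩ hθ'
  exact sub_pos.mp (trigExcess_pi_div_three_pos.trans_le h)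
end

section
/- For every real number θ with π/3 ≤ θ < π/2, one has 1 + cos(7π/6 − 2θ) ≥ 2 · sin(θ / 2), with equality if and only if θ = π/3. -/
open Real

theorem stmt_12 (θ : ℝ) (hθ : π / 3 ≤ θ) (hθ' : θ < π / 2) :
    1 + cos (7 * π / 6 - 2 * θ) ≥ 2 * sin (θ / 2) ∧
      (1 + cos (7 * π / 6 - 2 * θ) = 2 * sin (θ / 2) ↔ θ = π / 3) := by
  have hπ := Real.pi_pos
  have hπ' := Real.pi_lt_d2
  set x := θ - π / 3 with hx
  have hx0 : 0 ≤ x := by simp only [hx]; linarith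
  have hx1 : x < π / 6 := by simp only [hx]; linarith
  have e1 : cos (7 * π / 6 - 2 * θ) = sin (2 * x) := by
    rw [show 7 * π / 6 - 2 * θ = π / 2 - 2 * x by rw [hx]; ring,
      Real.cos_pi_div_two_sub]
  have e2 : 2 * sin (θ / 2) = cos (x / 2) + Real.sqrt 3 * sin (x / 2) := by
    rw [show θ / 2 = π / 6 + x / 2 by rw [hx]; ring, Real.sin_add,
      Real.sin_pi_div_six, Real.cos_pi_div_six]
    ring
  have hsq3 : Real.sqrt 3 < 1.8 := by
    nlinarith [Real.sq_sqrt (by norm_num : (3:ℝ) ≥ 0), Real.sqrt_nonneg 3]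
  have key : 0 < x → cos (x / 2) + Real.sqrt 3 * sin (x / 2) < 1 + sin (2 * x) := by
    intro hxp
    have h1 : cos (x / 2) ≤ 1 := Real.cos_le_one _
    have h2 : sin (x / 2) ≤ x / 2 := Real.sin_le (by linarith)
    have h3 : 0 ≤ sin (x / 2) := Real.sin_nonneg_of_nonneg_of_le_pi (by linarith) (by nlinarith)
    have h4 : 2 / π * (2 * x) ≤ sin (2 * x) :=
      Real.mul_le_sin (by linarith) (by linarith)
    have h5 : Real.sqrt 3 * sin (x / 2) ≤ 1.8 * (x / 2) := by nlinarith
    have h6 : 1.8 * (x / 2) < 2 / π * (2 * x) := by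
      rw [div_mul_eq_mul_div, lt_div_iff₀ hπ]
      nlinarith [mul_lt_mul_of_pos_left hπ' hxp]
    linarith
  have heq0 : cos (0 / 2) + Real.sqrt 3 * sin (0 / 2) = 1 + sin (2 * 0) := by
    norm_num
  rw [e1, e2]
  rcases eq_or_lt_of_le hx0 with h | h
  · constructor
    · rw [← h]; linarith [heq0]
    · constructor
      · intro _; simp only [hx] at h; linarith
      · intro _; rw [← h]; linarith [heq0]
  · have := key h
    constructor
    · linarith
    · constructor
      · intro heq; linarith
      · intro hθeq; exfalso; simp only [hx, hθeq] at h; linarith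
end

section
/- For every real number a with 7π/24 ≤ a ≤ π/2, one has cos²(a) + cos²(7π/12 − a) ≥ 1 − sin(π/12), with equality when a = 7π/24. -/
open Real

theorem stmt_13 (a : ℝ) (ha : 7 * π / 24 ≤ a) (ha' : a ≤ π / 2) :
    cos a ^ 2 + cos (7 * π / 12 - a) ^ 2 ≥ 1 - sin (π / 12) ∧
      (a = 7 * π / 24 →
        cos a ^ 2 + cos (7 * π / 12 - a) ^ 2 = 1 - sin (π / 12)) := by
  have hc : cos (7 * π / 12) = - sin (π / 12) := by
    have : (7 : ℝ) * π / 12 = π / 2 - -(π / 12) := by ring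
    rw [this, Real.cos_pi_div_two_sub, Real.sin_neg]
  have key : cos a ^ 2 + cos (7 * π / 12 - a) ^ 2
      = 1 + (- sin (π / 12)) * cos (2 * a - 7 * π / 12) := by
    have h1 : cos a ^ 2 = 1 / 2 + cos (2 * a) / 2 := Real.cos_sq a
    have h2 : cos (7 * π / 12 - a) ^ 2
        = 1 / 2 + cos (2 * (7 * π / 12 - a)) / 2 := Real.cos_sq _
    have h3 : cos (2 * a) + cos (2 * (7 * π / 12 - a))
        = 2 * cos (7 * π / 12) * cos (2 * a - 7 * π / 12) := by
      rw [Real.cos_add_cos]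
      ring_nf
    rw [h1, h2, ← hc]
    linarith [h3]
  have hs : 0 ≤ sin (π / 12) := by
    apply Real.sin_nonneg_of_nonneg_of_le_pi
    · positivity
    · nlinarith [Real.pi_pos]
  constructor
  · rw [key]
    nlinarith [Real.cos_le_one (2 * a - 7 * π / 12)]
  · intro h
    subst h
    rw [key]
    have : 2 * (7 * π / 24) - 7 * π / 12 = 0 := by ring
    rw [this, Real.cos_zero]
    ring
end
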